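/- arXiv:math/0008046 — 2 statements merged into one kernel-verified Lean document; each statement's English description precedes it below -/
import Mathlib

section
/- In the q-boson algebra with relation a a⁺ − q² a⁺ a = 1, the divided powers satisfy a^(n) · (a⁺)^m = Σ_{s=0}^{m} q^{n(s+m)} q^{(s−m)(s+m+1)/2} [m choose s]_q (a⁺)^s a^(n−m+s), for all n ≥ m ≥ 0, where a^(k) = a^k/[k]_q!. -/
noncomputable section

/-- The field `ℂ(q)` of rational functions. -/
abbrev Fq : Type := RatFunc ℂ

/-- The indeterminate `q`. -/
def q : Fq := RatFunc.X

/-- The balanced quantum integer `[n]_q = (q^n - q^{-n})/(q - q^{-1})`. -/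
def qint (n : ℤ) : Fq := (q ^ n - q ^ (-n)) / (q - q⁻¹)

/-- The quantum factorial `[m]_q!`. -/
def qfact : ℕ → Fq
  | 0 => 1
  | n + 1 => qint (n + 1) * qfact n

/-- The balanced Gaussian binomial coefficient `[n choose k]_q`,
with the convention that it is `0` for `k < 0`. -/
def qbinom (n k : ℤ) : Fq :=
  if k < 0 then 0
  else (∏ i ∈ Finset.range k.toNat, qint (n - i)) / qfact k.toNat


/-!
Commuting `a⁺` through a power of `a` gives
`a^(k+1) a⁺ = q^{2(k+1)} a⁺ a^(k+1) + q^k [k+1]_q a^k`, which for divided powers reads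
`a^(k+1) a⁺ = q^{2(k+1)} a⁺ a^(k+1) + q^k a^(k)`. Writing `n = m + r` and inducting on `m`
for all `r` at once, multiplying the formula on the right by `a⁺` splits every term in two;
regrouping them is exactly the q-Pascal rule `[m+1, s] = q^s [m, s] + q^{s-1-m} [m, s-1]`,
once the exponent `(s-m)(s+m+1)/2` is shifted accordingly in `m` and `s`.
-/

lemma q_ne_zero : q ≠ 0 := RatFunc.X_ne_zero

lemma q_pow_ne_one {k : ℕ} (hk : k ≠ 0) : q ^ k ≠ 1 := fun h =>
  RatFunc.transcendental_X (K := ℂ)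
    ⟨Polynomial.X ^ k - Polynomial.C 1, Polynomial.X_pow_sub_C_ne_zero (Nat.pos_of_ne_zero hk) 1,
      by simpa [q, sub_eq_zero] using h⟩

lemma q_zpow_natCast_sub_zpow_neg_ne_zero {k : ℕ} (hk : k ≠ 0) :
    q ^ (k : ℤ) - q ^ (-(k : ℤ)) ≠ 0 := by
  intro h
  have hsq : q ^ (k : ℤ) * q ^ (k : ℤ) = 1 := by
    nth_rw 1 [sub_eq_zero.mp h]
    rw [← zpow_add₀ q_ne_zero, neg_add_cancel, zpow_zero]
  rw [zpow_natCast, ← pow_add] at hsq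
  exact q_pow_ne_one (by omega) hsq

lemma q_sub_inv_ne_zero : q - q⁻¹ ≠ 0 := by
  simpa using q_zpow_natCast_sub_zpow_neg_ne_zero (k := 1) one_ne_zero

lemma qint_natCast_ne_zero {k : ℕ} (hk : k ≠ 0) : qint k ≠ 0 :=
  div_ne_zero (q_zpow_natCast_sub_zpow_neg_ne_zero hk) q_sub_inv_ne_zero

lemma qint_one : qint 1 = 1 := by
  rw [qint, div_eq_one_iff_eq q_sub_inv_ne_zero, zpow_one, zpow_neg_one]

lemma qint_add (x y : ℤ) : qint (x + y) = q ^ y * qint x + q ^ (-x) * qint y := by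
  simp only [qint, ← mul_div_assoc, ← add_div, neg_add, zpow_add₀ q_ne_zero]
  ring

lemma qfact_succ (k : ℕ) : qfact (k + 1) = qint (k + 1) * qfact k := rfl

lemma qfact_ne_zero (k : ℕ) : qfact k ≠ 0 := by
  induction k with
  | zero => exact one_ne_zero
  | succ k ih => exact mul_ne_zero (mod_cast qint_natCast_ne_zero k.succ_ne_zero) ih

lemma qbinom_natCast (m : ℤ) (k : ℕ) :
    qbinom m k = (∏ i ∈ Finset.range k, qint (m - i)) / qfact k := by
  simp [qbinom]

lemma qbinom_of_neg (m : ℤ) {k : ℤ} (hk : k < 0) : qbinom m k = 0 := if_pos hk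

lemma qbinom_zero_right (m : ℤ) : qbinom m 0 = 1 := by
  simp [qbinom, qfact]

lemma qbinom_natCast_eq_zero_of_lt {m k : ℕ} (h : m < k) : qbinom m k = 0 := by
  rw [qbinom_natCast]
  refine div_eq_zero_iff.mpr (Or.inl (Finset.prod_eq_zero (Finset.mem_range.mpr h) ?_))
  simp [qint]

lemma qbinom_succ_left (m k : ℤ) :
    qbinom (m + 1) k = q ^ k * qbinom m k + q ^ (k - 1 - m) * qbinom m (k - 1) := by
  rcases lt_or_ge k 0 with hk | hk
  · simp [qbinom_of_neg _ hk, qbinom_of_neg _ (show k - 1 < 0 by omega)]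
  lift k to ℕ using hk
  cases k with
  | zero => simp [qbinom_zero_right, qbinom_of_neg]
  | succ j =>
    have hsplit :
        qint (m + 1) = q ^ ((j : ℤ) + 1) * qint (m - j) + q ^ ((j : ℤ) - m) * qint (j + 1) := by
      rw [show m + 1 = (m - j) + (j + 1) by ring, qint_add, neg_sub]
    have hj : qint ((j : ℤ) + 1) ≠ 0 := mod_cast qint_natCast_ne_zero j.succ_ne_zero
    have hshift : ∏ i ∈ Finset.range (j + 1), qint (m + 1 - i) =
        qint (m + 1) * ∏ i ∈ Finset.range j, qint (m - i) := by
      rw [Finset.prod_range_succ', mul_comm]; push_cast; ring_nf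
    rw [show ((j + 1 : ℕ) : ℤ) - 1 = j by push_cast; ring, qbinom_natCast, qbinom_natCast,
      qbinom_natCast, hshift, Finset.prod_range_succ, qfact_succ, hsplit]
    push_cast
    field_simp [qfact_ne_zero j]

def bosonExp (s m : ℤ) : ℤ := ((s - m) * (s + m + 1)) / 2

def bosonCoeff (n m s : ℤ) : Fq := q ^ (n * (s + m)) * q ^ bosonExp s m * qbinom m s

lemma two_mul_bosonExp (s m : ℤ) : 2 * bosonExp s m = (s - m) * (s + m + 1) := by
  have hfac : (s - m) * (s + m + 1) = (s - m) * (s - m + 1) + 2 * ((s - m) * m) := by ring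
  have heven : Even ((s - m) * (s + m + 1)) :=
    hfac ▸ (Int.even_mul_succ_self (s - m)).add (even_two_mul _)
  exact Int.mul_ediv_cancel' heven.two_dvd

lemma bosonExp_eq_bosonExp_succ_right_add (s m : ℤ) :
    bosonExp s m = bosonExp s (m + 1) + (m + 1) := by
  have h₀ := two_mul_bosonExp s m
  have h₁ := two_mul_bosonExp s (m + 1)
  linarith

lemma bosonExp_succ_right (s m : ℤ) : bosonExp s (m + 1) = bosonExp (s - 1) m + (s - 1 - m) := by
  have h₀ := two_mul_bosonExp s (m + 1)
  have h₁ := two_mul_bosonExp (s - 1) m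
  linarith

lemma bosonCoeff_of_neg (n m : ℤ) {s : ℤ} (hs : s < 0) : bosonCoeff n m s = 0 := by
  rw [bosonCoeff, qbinom_of_neg _ hs, mul_zero]

lemma bosonCoeff_natCast_eq_zero_of_lt (n : ℤ) {m s : ℕ} (h : m < s) :
    bosonCoeff n m s = 0 := by
  rw [bosonCoeff, qbinom_natCast_eq_zero_of_lt h, mul_zero]

lemma bosonCoeff_succ (n m s : ℤ) :
    bosonCoeff n (m + 1) s =
      q ^ (2 * (n - m + s - 1)) * bosonCoeff n m (s - 1) +
        q ^ (n - m + s - 1) * bosonCoeff n m s := by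
  rw [bosonCoeff, bosonCoeff, bosonCoeff, qbinom_succ_left, bosonExp_eq_bosonExp_succ_right_add s m,
    bosonExp_succ_right, mul_add, add_comm]
  simp only [← mul_assoc, ← zpow_add₀ q_ne_zero]
  congr 3 <;> ring

lemma sum_bosonCoeff_succ_smul {M : Type*} [AddCommGroup M] [Module Fq M] (n : ℤ) (m : ℕ)
    (f : ℕ → M) :
    ∑ s ∈ Finset.range (m + 1 + 1), bosonCoeff n (m + 1) s • f s =
      ∑ s ∈ Finset.range (m + 1), (q ^ (2 * (n - m + s)) * bosonCoeff n m s) • f (s + 1) +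
      ∑ s ∈ Finset.range (m + 1), (q ^ (n - m + s - 1) * bosonCoeff n m s) • f s := by
  simp only [bosonCoeff_succ, add_smul, Finset.sum_add_distrib]
  congr 1
  · rw [Finset.sum_range_succ', Nat.cast_zero, zero_sub, bosonCoeff_of_neg n m (by norm_num),
      mul_zero, zero_smul, add_zero]
    refine Finset.sum_congr rfl fun s _ => ?_
    rw [Nat.cast_succ, add_sub_cancel_right, ← add_assoc, add_sub_cancel_right]
  · rw [Finset.sum_range_succ, bosonCoeff_natCast_eq_zero_of_lt n m.lt_succ_self, mul_zero,
      zero_smul, add_zero]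

lemma q_pow_succ_mul_qint_succ (k : ℕ) :
    q ^ (k + 1) * qint (k + 1 + 1) = q ^ 2 * (q ^ k * qint (k + 1)) + 1 := by
  have hinv : q ^ (k + 1) * q ^ (-((k : ℤ) + 1)) = 1 := by
    rw [zpow_neg, ← Nat.cast_succ, zpow_natCast, mul_inv_cancel₀ (pow_ne_zero _ q_ne_zero)]
  rw [qint_add ((k : ℤ) + 1) 1, zpow_one, qint_one, mul_one, mul_add, hinv]
  ring

section Boson

variable {A : Type*} [Ring A] [Algebra Fq A]

def divPow (x : A) (k : ℕ) : A := (qfact k)⁻¹ • x ^ k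

variable {a ap : A}

lemma pow_succ_mul_of_rel (h : a * ap - (q ^ 2 : Fq) • (ap * a) = 1) (k : ℕ) :
    a ^ (k + 1) * ap =
      q ^ (2 * (k + 1)) • (ap * a ^ (k + 1)) + (q ^ k * qint (k + 1)) • a ^ k := by
  have hrel : a * ap = (q ^ 2 : Fq) • (ap * a) + 1 := sub_eq_iff_eq_add'.mp h
  induction k with
  | zero => simpa [qint_one] using hrel
  | succ k ih =>
    calc a ^ (k + 1 + 1) * ap = a ^ (k + 1) * (a * ap) := by rw [pow_succ, mul_assoc]
      _ = (q ^ 2 : Fq) • ((a ^ (k + 1) * ap) * a) + a ^ (k + 1) := by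
        rw [hrel, mul_add, mul_one, mul_smul_comm, mul_assoc]
      _ = _ := by
        rw [ih, add_mul, smul_mul_assoc, smul_mul_assoc, mul_assoc, ← pow_succ, ← pow_succ,
          Nat.cast_succ, q_pow_succ_mul_qint_succ, smul_add, smul_smul, smul_smul, add_smul,
          one_smul, ← pow_add, add_assoc, show 2 + 2 * (k + 1) = 2 * (k + 1 + 1) by ring]

lemma divPow_succ_mul_of_rel (h : a * ap - (q ^ 2 : Fq) • (ap * a) = 1) (k : ℕ) :
    divPow a (k + 1) * ap =
      q ^ (2 * (k + 1)) • (ap * divPow a (k + 1)) + q ^ k • divPow a k := by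
  simp only [divPow, smul_mul_assoc, mul_smul_comm, pow_succ_mul_of_rel h, smul_add, smul_smul]
  congr 2
  · ring
  · have hk : qint ((k : ℤ) + 1) ≠ 0 := mod_cast qint_natCast_ne_zero k.succ_ne_zero
    rw [qfact_succ]
    field_simp [qfact_ne_zero k]

lemma pow_mul_divPow_succ_mul_of_rel (h : a * ap - (q ^ 2 : Fq) • (ap * a) = 1) (s k : ℕ) :
    ap ^ s * divPow a (k + 1) * ap =
      q ^ (2 * (k + 1)) • (ap ^ (s + 1) * divPow a (k + 1)) +
        q ^ k • (ap ^ s * divPow a k) := by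
  rw [mul_assoc, divPow_succ_mul_of_rel h, mul_add, mul_smul_comm, mul_smul_comm, ← mul_assoc,
    ← pow_succ]

-- Indexed by `n = m + r` to avoid the truncated subtraction `n - m`; the induction on `m` then
-- needs the statement for all `r`.
theorem divPow_add_mul_pow_of_rel (h : a * ap - (q ^ 2 : Fq) • (ap * a) = 1) (m r : ℕ) :
    divPow a (m + r) * ap ^ m =
      ∑ s ∈ Finset.range (m + 1),
        bosonCoeff (m + r : ℕ) m s • (ap ^ s * divPow a (r + s)) := by
  induction m generalizing r with
  | zero => simp [bosonCoeff, bosonExp, qbinom_zero_right]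
  | succ m ih =>
    rw [show m + 1 + r = m + (r + 1) by omega, Nat.cast_succ m, sum_bosonCoeff_succ_smul,
      pow_succ, ← mul_assoc, ih, Finset.sum_mul, ← Finset.sum_add_distrib]
    refine Finset.sum_congr rfl fun s _ => ?_
    rw [smul_mul_assoc, show r + 1 + s = r + s + 1 by omega, pow_mul_divPow_succ_mul_of_rel h,
      smul_add, smul_smul, smul_smul]
    congr 2 <;> rw [mul_comm, ← zpow_natCast] <;> congr 2 <;> push_cast <;> ring

end Boson

/-- In the q-boson algebra with `a a⁺ - q² a⁺ a = 1`, for `n ≥ m ≥ 0`: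
`a^(n) · (a⁺)^m = Σ_{s=0}^{m} q^{n(s+m)} q^{(s-m)(s+m+1)/2} [m choose s]_q (a⁺)^s a^(n-m+s)`,
where `a^(k) = a^k/[k]_q!`. -/
theorem qboson_divided_pow_mul_pow {A : Type*} [Ring A] [Algebra Fq A]
    (a ap : A) (h : a * ap - (q ^ 2 : Fq) • (ap * a) = 1)
    (n m : ℕ) (hmn : m ≤ n) :
    ((qfact n)⁻¹ • a ^ n) * ap ^ m =
      ∑ s ∈ Finset.range (m + 1),
        (q ^ ((n : ℤ) * ((s : ℤ) + m)) *
         q ^ ((((s : ℤ) - m) * ((s : ℤ) + m + 1)) / 2) *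
         qbinom m s) •
          (ap ^ s * ((qfact (n - m + s))⁻¹ • a ^ (n - m + s))) := by
  obtain ⟨r, rfl⟩ := Nat.exists_eq_add_of_le hmn
  rw [Nat.add_sub_cancel_left]
  exact divPow_add_mul_pow_of_rel h m r
end
end

section
/- Let ε be a primitive p-th root of unity (p odd > 1). In the Weyl module V_m with basis v₀,…,v_m and actions K v_r = ε^{m−2r} v_r, e v_r = [m−r+1]_ε v_{r−1}, f v_r = [r+1]_ε v_{r+1}, e^(p) v_r = ((m−r)₁+1) v_{r−p}, f^(p) v_r = (r₁+1) v_{r+p}: if m ≥ p and m₀ ≠ p−1 (m = m₀ + pm₁, 0 ≤ m₀ < p), then V_m is not completely reducible, i.e. the invariant subspace V' = span{v_r : m₀ < r₀ < p, r₁ < m₁} has no invariant complement. -/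
noncomputable section

/-- The balanced quantum integer `[n]_ε = (ε^n - ε^{-n})/(ε - ε^{-1})`. -/
def qintC (ε : ℂ) (n : ℤ) : ℂ := (ε ^ n - ε ^ (-n)) / (ε - ε⁻¹)

/-- The basis vector `v_i` of the Weyl module `V_m` (zero for out-of-range `i`). -/
def wv (m : ℕ) (i : ℤ) : Fin (m + 1) → ℂ :=
  if h : 0 ≤ i ∧ i ≤ m then Pi.single (⟨i.toNat, by omega⟩ : Fin (m + 1)) 1 else 0

lemma wv_in {m : ℕ} {i : ℤ} (h0 : 0 ≤ i) (h1 : i ≤ m) :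
    wv m i = Pi.single (⟨i.toNat, by omega⟩ : Fin (m + 1)) 1 := by
  rw [wv, dif_pos ⟨h0, h1⟩]

lemma wv_out {m : ℕ} {i : ℤ} (h : ¬ (0 ≤ i ∧ i ≤ m)) : wv m i = 0 := by
  rw [wv, dif_neg h]

lemma qintC_eq_zero {p : ℕ} {ε : ℂ} (hε : IsPrimitiveRoot ε p) {n : ℤ}
    (hn : (p : ℤ) ∣ n) : qintC ε n = 0 := by
  have h1 : ε ^ n = 1 := (hε.zpow_eq_one_iff_dvd n).2 hn
  have h2 : ε ^ (-n) = 1 := (hε.zpow_eq_one_iff_dvd (-n)).2 (dvd_neg.2 hn)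
  simp [qintC, h1, h2]

lemma qintC_ne_zero {p : ℕ} {ε : ℂ} (hodd : Odd p) (hp : 1 < p)
    (hε : IsPrimitiveRoot ε p) {n : ℤ} (hn : ¬ (p : ℤ) ∣ n) : qintC ε n ≠ 0 := by
  have hε0 : ε ≠ 0 := hε.ne_zero (by omega)
  have hden : ε - ε⁻¹ ≠ 0 := by
    intro h
    have heq : ε = ε⁻¹ := sub_eq_zero.mp h
    have h2 : ε ^ (2 : ℕ) = 1 := by
      rw [pow_two]; nth_rewrite 2 [heq]; exact mul_inv_cancel₀ hε0
    have hd := (hε.pow_eq_one_iff_dvd 2).1 h2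
    have := Nat.le_of_dvd (by norm_num) hd
    obtain ⟨k, hk⟩ := hodd
    omega
  intro h
  rw [qintC, div_eq_zero_iff] at h
  rcases h with h | h
  · have hnum : ε ^ n = ε ^ (-n) := by linear_combination h
    have h2n : ε ^ (2 * n) = 1 := by
      rw [two_mul, zpow_add₀ hε0]
      nth_rewrite 2 [hnum]
      rw [← zpow_add₀ hε0]
      simp
    have hdvd : (p : ℤ) ∣ 2 * n := (hε.zpow_eq_one_iff_dvd (2 * n)).1 h2n
    have hcop : IsCoprime ((p : ℕ) : ℤ) ((2 : ℕ) : ℤ) :=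
      (Nat.isCoprime_iff_coprime.mpr (Nat.coprime_two_left.mpr hodd)).symm
    exact hn (IsCoprime.dvd_of_dvd_mul_left (by exact_mod_cast hcop) hdvd)
  · exact hden h

/-- With the Weyl module setup: if `m ≥ p` and `m₀ ≠ p - 1` then `V_m` is not
completely reducible: the invariant subspace
`V' = span{v_r : m₀ < r₀ < p, r₁ < m₁}` has no invariant complement. -/
theorem weyl_module_not_completely_reducible (p : ℕ) (hodd : Odd p) (hp : 1 < p)
    (ε : ℂ) (hε : IsPrimitiveRoot ε p) (m : ℕ)
    (K e f E F : (Fin (m + 1) → ℂ) →ₗ[ℂ] (Fin (m + 1) → ℂ))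
    (hK : ∀ r : ℤ, 0 ≤ r → r ≤ m → K (wv m r) = ε ^ ((m : ℤ) - 2 * r) • wv m r)
    (he : ∀ r : ℤ, 0 ≤ r → r ≤ m →
      e (wv m r) = qintC ε ((m : ℤ) - r + 1) • wv m (r - 1))
    (hf : ∀ r : ℤ, 0 ≤ r → r ≤ m →
      f (wv m r) = qintC ε (r + 1) • wv m (r + 1))
    (hE : ∀ r : ℤ, 0 ≤ r → r ≤ m →
      E (wv m r) = ((((m : ℤ) - r).ediv p + 1 : ℤ) : ℂ) • wv m (r - p))
    (hF : ∀ r : ℤ, 0 ≤ r → r ≤ m →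
      F (wv m r) = ((r.ediv p + 1 : ℤ) : ℂ) • wv m (r + p))
    (hm : p ≤ m) (hm0 : m % p ≠ p - 1) :
    let V' : Submodule ℂ (Fin (m + 1) → ℂ) :=
      Submodule.span ℂ {x | ∃ r : ℤ, 0 ≤ r ∧ r ≤ m ∧
        ((m : ℤ)).emod p < r.emod p ∧ r.emod p < p ∧
        r.ediv p < ((m : ℤ)).ediv p ∧ x = wv m r}
    ¬ ∃ W : Submodule ℂ (Fin (m + 1) → ℂ),
        (∀ x ∈ W, K x ∈ W ∧ e x ∈ W ∧ f x ∈ W ∧ E x ∈ W ∧ F x ∈ W) ∧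
        V' ⊓ W = ⊥ ∧ V' ⊔ W = ⊤ := by
  intro V'
  rintro ⟨W, hW, hbot, htop⟩
  have emod_eq : ∀ a b : ℤ, a.emod b = a % b := fun _ _ => rfl
  have ediv_eq : ∀ a b : ℤ, a.ediv b = a / b := fun _ _ => rfl
  have hp0 : (0 : ℤ) < (p : ℤ) := by exact_mod_cast Nat.zero_lt_of_lt hp
  set m0 : ℕ := m % p with hm0def
  have hm0lt : m0 < p := Nat.mod_lt m (by omega)
  have hm0lt' : m0 + 1 < p := by omega
  have hmmodZ : ((m0 : ℕ) : ℤ) = (m : ℤ) % (p : ℤ) := by rw [hm0def]; push_cast; ring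
  have hmdivZ : ((m / p : ℕ) : ℤ) = (m : ℤ) / (p : ℤ) := by push_cast; ring
  have hm1 : 1 ≤ (m : ℤ) / (p : ℤ) := by
    rw [← hmdivZ]
    exact_mod_cast (Nat.one_le_div_iff (by omega)).mpr hm
  set j0 : Fin (m + 1) := ⟨m0 + 1, by omega⟩ with hj0def
  -- the distinguished generator of V'
  have hx1 : wv m ((m0 : ℤ) + 1) ∈ V' := by
    apply Submodule.subset_span
    refine ⟨(m0 : ℤ) + 1, by omega, by omega, ?_, ?_, ?_, rfl⟩
    · simp only [emod_eq]
      rw [show ((m0 : ℤ) + 1) % (p : ℤ) = (m0 : ℤ) + 1 from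
        Int.emod_eq_of_lt (by omega) (by omega), ← hmmodZ]
      omega
    · simp only [emod_eq]
      rw [show ((m0 : ℤ) + 1) % (p : ℤ) = (m0 : ℤ) + 1 from
        Int.emod_eq_of_lt (by omega) (by omega)]
      omega
    · simp only [ediv_eq]
      rw [show ((m0 : ℤ) + 1) / (p : ℤ) = 0 from
        Int.ediv_eq_zero_of_lt (by omega) (by omega)]
      omega
  -- V' is invariant under f
  have hVf : ∀ x ∈ V', f x ∈ V' := by
    have hmap : Submodule.map f V' ≤ V' := by
      rw [Submodule.map_span, Submodule.span_le]
      rintro y ⟨x, ⟨r, hr0, hrm, h1, h2, h3, rfl⟩, rfl⟩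
      simp only [emod_eq, ediv_eq] at h1 h2 h3
      simp only [SetLike.mem_coe]
      rw [hf r hr0 hrm]
      have hmodnn : 0 ≤ r % (p : ℤ) := Int.emod_nonneg r (by omega)
      by_cases hc : r % (p : ℤ) = (p : ℤ) - 1
      · have hdvd : (p : ℤ) ∣ (r + 1) := by
          refine ⟨r / (p : ℤ) + 1, ?_⟩
          have hkey := Int.mul_ediv_add_emod r (p : ℤ)
          have : (p : ℤ) * (r / (p : ℤ) + 1) = (p : ℤ) * (r / (p : ℤ)) + (p : ℤ) := by ring
          linarith
        rw [qintC_eq_zero hε hdvd, zero_smul]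
        exact Submodule.zero_mem V'
      · have hrm2 : r % (p : ℤ) < (p : ℤ) - 1 := lt_of_le_of_ne (by linarith) hc
        have hkey := Int.mul_ediv_add_emod r (p : ℤ)
        have hkeym := Int.mul_ediv_add_emod ((m : ℤ)) (p : ℤ)
        have hmmodnn : 0 ≤ (m : ℤ) % (p : ℤ) := Int.emod_nonneg _ (by omega)
        have hsplit : r + 1 = (r % (p : ℤ) + 1) + (p : ℤ) * (r / (p : ℤ)) := by linarith
        have hdiv : (r + 1) / (p : ℤ) = r / (p : ℤ) := by
          rw [hsplit, Int.add_mul_ediv_left _ _ (by omega),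
            Int.ediv_eq_zero_of_lt (by linarith) (by linarith), zero_add]
        have hmod : (r + 1) % (p : ℤ) = r % (p : ℤ) + 1 := by
          rw [hsplit, Int.add_mul_emod_self_left,
            Int.emod_eq_of_lt (by linarith) (by linarith)]
        have hle : r + 1 ≤ (m : ℤ) := by
          have h4 : (p : ℤ) * (r / (p : ℤ) + 1) ≤ (p : ℤ) * ((m : ℤ) / (p : ℤ)) :=
            mul_le_mul_of_nonneg_left (by omega) hp0.le
          have h5 : (p : ℤ) * (r / (p : ℤ) + 1) = (p : ℤ) * (r / (p : ℤ)) + (p : ℤ) := by ring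
          linarith
        apply Submodule.smul_mem
        apply Submodule.subset_span
        refine ⟨r + 1, by omega, hle, ?_, ?_, ?_, rfl⟩
        · simp only [emod_eq]; rw [hmod]; linarith
        · simp only [emod_eq]; rw [hmod]; linarith
        · simp only [ediv_eq]; rw [hdiv]; exact h3
    exact fun x hx => hmap ⟨x, hx, rfl⟩
  -- the coordinate j0 of f x vanishes for all x in V'
  have hval : ∀ x ∈ V', f x j0 = 0 := by
    have hker : V' ≤ LinearMap.ker ((LinearMap.proj j0 : (Fin (m + 1) → ℂ) →ₗ[ℂ] ℂ) ∘ₗ f) := by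
      rw [show V' = Submodule.span ℂ _ from rfl, Submodule.span_le]
      rintro x ⟨r, hr0, hrm, h1, h2, h3, rfl⟩
      simp only [emod_eq, ediv_eq] at h1 h2 h3
      simp only [SetLike.mem_coe, LinearMap.mem_ker, LinearMap.comp_apply, LinearMap.proj_apply]
      rw [hf r hr0 hrm]
      simp only [Pi.smul_apply, smul_eq_mul]
      rcases le_or_gt (r + 1) (m : ℤ) with hle | hgt
      · rw [wv_in (by omega) hle, Pi.single_apply, if_neg, mul_zero]
        intro hEq
        have hval : (m0 + 1 : ℕ) = (r + 1).toNat := congrArg Fin.val hEq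
        have hr : r = (m0 : ℤ) := by omega
        have : r % (p : ℤ) = (m0 : ℤ) := by
          rw [hr]; exact Int.emod_eq_of_lt (by omega) (by omega)
        rw [this, ← hmmodZ] at h1
        omega
      · rw [wv_out (by omega), Pi.zero_apply, mul_zero]
    intro x hx
    exact hker hx
  -- decompose wv m m0
  have hmem : wv m ((m0 : ℤ)) ∈ V' ⊔ W := by rw [htop]; exact Submodule.mem_top
  obtain ⟨u, hu, w, hw, huw⟩ := Submodule.mem_sup.mp hmem
  have hfm : f (wv m ((m0 : ℤ))) = qintC ε ((m0 : ℤ) + 1) • wv m ((m0 : ℤ) + 1) :=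
    hf _ (by omega) (by omega)
  set c := qintC ε ((m0 : ℤ) + 1) with hc_def
  have hc : c ≠ 0 := by
    apply qintC_ne_zero hodd hp hε
    intro hdvd
    have := Int.le_of_dvd (by omega) hdvd
    omega
  have hsum : f u + f w = c • wv m ((m0 : ℤ) + 1) := by
    rw [← map_add, huw, hfm]
  have hfw : f w ∈ V' := by
    have : f w = c • wv m ((m0 : ℤ) + 1) - f u := by
      rw [← hsum]; abel
    rw [this]
    exact Submodule.sub_mem _ (Submodule.smul_mem _ _ hx1) (hVf u hu)
  have hfw0 : f w = 0 := by
    have hboth : f w ∈ V' ⊓ W := ⟨hfw, (hW w hw).2.2.1⟩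
    rw [hbot] at hboth
    exact (Submodule.mem_bot ℂ).mp hboth
  have hfu : f u = c • wv m ((m0 : ℤ) + 1) := by
    rw [← hsum, hfw0, add_zero]
  have h0 : f u j0 = 0 := hval u hu
  rw [hfu] at h0
  have hx1j : wv m ((m0 : ℤ) + 1) j0 = 1 := by
    rw [wv_in (by omega) (by omega), Pi.single_apply, if_pos]
    exact Fin.ext (show m0 + 1 = ((m0 : ℤ) + 1).toNat by omega)
  simp only [Pi.smul_apply, hx1j, smul_eq_mul, mul_one] at h0
  exact hc h0
end
end
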